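/- For any 2n-dimensional probability vector μ sorted non-increasingly and any t ≥ 0, let ν = (μ_{2n} + t, μ₁, μ₂, …, μ_{2n−1})/(1+t). Then (diag(μ) + t·e₁e₁ᵀ)/(1+t) majorizes ν, and ν majorizes (μ_{2n}+t, (1−μ_{2n})/(2n−1), …, (1−μ_{2n})/(2n−1))/(1+t). -/

import Mathlib

/-- The sum of the `k` largest entries of `u`. -/
noncomputable def maxSum {n : ℕ} (u : Fin n → ℝ) (k : ℕ) : ℝ :=
  sSup {s : ℝ | ∃ A : Finset (Fin n), A.card = k ∧ ∑ i ∈ A, u i = s}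

/-- `Majorizes v u` means `u ≺ v`. -/
def Majorizes {n : ℕ} (v u : Fin n → ℝ) : Prop :=
  (∀ k : ℕ, maxSum u k ≤ maxSum v k) ∧ ∑ i, u i = ∑ i, v i

/-- The vector `ν = (μ_{2n} + t, μ₁, …, μ_{2n−1})/(1+t)` obtained from a sorted
probability vector `μ` by moving the smallest entry to the front and adding noise
weight `t`. -/
noncomputable def shiftVec (n : ℕ) (μ : Fin (2 * n) → ℝ) (t : ℝ) : Fin (2 * n) → ℝ :=
  fun i =>
    (if i.val = 0 then μ ⟨2 * n - 1, by have := i.isLt; omega⟩ + t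
      else μ ⟨i.val - 1, by have := i.isLt; omega⟩) / (1 + t)

lemma maxSum_mono {m k : ℕ} (u v : Fin m → ℝ)
    (h : ∀ A : Finset (Fin m), A.card = k →
      ∃ B : Finset (Fin m), B.card = k ∧ ∑ i ∈ A, u i ≤ ∑ i ∈ B, v i) :
    maxSum u k ≤ maxSum v k := by
  unfold maxSum
  by_cases hk : k ≤ m
  · have hfin : ∀ w : Fin m → ℝ,
        {s : ℝ | ∃ A : Finset (Fin m), A.card = k ∧ ∑ i ∈ A, w i = s}.Finite := by
      intro w
      have : {s : ℝ | ∃ A : Finset (Fin m), A.card = k ∧ ∑ i ∈ A, w i = s}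
          = (fun A : Finset (Fin m) => ∑ i ∈ A, w i) '' {A | A.card = k} := by
        ext s; simp [Set.mem_image]
      rw [this]
      exact (Set.toFinite _).image _
    obtain ⟨A₀, _, hA₀⟩ := Finset.exists_subset_card_eq
      (s := (Finset.univ : Finset (Fin m))) (n := k) (by simpa using hk)
    refine csSup_le ⟨_, ⟨A₀, hA₀, rfl⟩⟩ ?_
    rintro x ⟨A, hA, rfl⟩
    obtain ⟨B, hB, hle⟩ := h A hA
    exact hle.trans (le_csSup ((hfin v).bddAbove) ⟨B, hB, rfl⟩)
  · have he : ∀ w : Fin m → ℝ,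
        {s : ℝ | ∃ A : Finset (Fin m), A.card = k ∧ ∑ i ∈ A, w i = s} = ∅ := by
      intro w
      ext s
      simp only [Set.mem_setOf_eq, Set.mem_empty_iff_false, iff_false]
      rintro ⟨A, hA, -⟩
      have := A.card_le_univ
      simp [hA, Finset.card_univ] at this
      omega
    rw [he u, he v]

lemma card_filter_Ico {m : ℕ} (a b : ℕ) (hb : b ≤ m) :
    (Finset.univ.filter (fun i : Fin m => a ≤ i.val ∧ i.val < b)).card = b - a := by
  rw [← Nat.card_Ico]
  refine Finset.card_bij' (fun (i : Fin m) _ => i.val)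
    (fun (x : ℕ) hx => (⟨x, by simp [Finset.mem_Ico] at hx; omega⟩ : Fin m))
    ?_ ?_ ?_ ?_
  · intro i hi; simp only [Finset.mem_filter, Finset.mem_univ, true_and] at hi
    simp [Finset.mem_Ico]; omega
  · intro x hx; simp only [Finset.mem_Ico] at hx
    simp only [Finset.mem_filter, Finset.mem_univ, true_and]; omega
  · intro i hi; rfl
  · intro x hx; rfl

lemma card_filter_lt {m : ℕ} (b : ℕ) (hb : b ≤ m) :
    (Finset.univ.filter (fun i : Fin m => i.val < b)).card = b := by
  have := card_filter_Ico (m := m) 0 b hb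
  simpa using this

lemma key_sorted {m : ℕ} (μ : Fin m → ℝ)
    (hsort : ∀ i j : Fin m, i ≤ j → μ j ≤ μ i) (j l : ℕ) (hj : j ≤ l) (hl : l ≤ m) :
    (j : ℝ) * ∑ i ∈ Finset.univ.filter (fun i : Fin m => i.val < l), μ i ≤
      (l : ℝ) * ∑ i ∈ Finset.univ.filter (fun i : Fin m => i.val < j), μ i := by
  rcases eq_or_lt_of_le hj with rfl | hjl
  · rfl
  · have hjm : j < m := lt_of_lt_of_le hjl hl
    set c := μ ⟨j, hjm⟩ with hc
    have hsplit : ∑ i ∈ Finset.univ.filter (fun i : Fin m => i.val < l), μ i =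
        (∑ i ∈ Finset.univ.filter (fun i : Fin m => i.val < j), μ i) +
        ∑ i ∈ Finset.univ.filter (fun i : Fin m => j ≤ i.val ∧ i.val < l), μ i := by
      rw [← Finset.sum_union]
      · congr 1
        ext i
        simp only [Finset.mem_union, Finset.mem_filter, Finset.mem_univ, true_and]
        omega
      · rw [Finset.disjoint_left]
        intro i hi hi'
        simp only [Finset.mem_filter, Finset.mem_univ, true_and] at hi hi'
        omega
    have h1 : ∑ i ∈ Finset.univ.filter (fun i : Fin m => j ≤ i.val ∧ i.val < l), μ i ≤
        ((l : ℝ) - (j : ℝ)) * c := by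
      have := Finset.sum_le_card_nsmul
        (Finset.univ.filter (fun i : Fin m => j ≤ i.val ∧ i.val < l)) μ c
        (fun i hi => by
          simp only [Finset.mem_filter, Finset.mem_univ, true_and] at hi
          exact hsort ⟨j, hjm⟩ i (by simp only [Fin.le_def]; omega))
      rw [card_filter_Ico j l hl, nsmul_eq_mul, Nat.cast_sub (le_of_lt hjl)] at this
      exact this
    have h2 : (j : ℝ) * c ≤ ∑ i ∈ Finset.univ.filter (fun i : Fin m => i.val < j), μ i := by
      have := Finset.card_nsmul_le_sum
        (Finset.univ.filter (fun i : Fin m => i.val < j)) μ c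
        (fun i hi => by
          simp only [Finset.mem_filter, Finset.mem_univ, true_and] at hi
          exact hsort i ⟨j, hjm⟩ (by simp only [Fin.le_def]; omega))
      rw [card_filter_lt (m := m) j (le_of_lt hjm), nsmul_eq_mul] at this
      exact this
    rw [hsplit]
    have hjr : (0:ℝ) ≤ (j:ℝ) := Nat.cast_nonneg j
    have hlr : (j:ℝ) ≤ (l:ℝ) := by exact_mod_cast le_of_lt hjl
    have e1 := mul_le_mul_of_nonneg_left h1 hjr
    have e2 := mul_le_mul_of_nonneg_left h2 (by linarith : (0:ℝ) ≤ (l:ℝ) - (j:ℝ))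
    nlinarith [e1, e2]


set_option maxHeartbeats 2000000 in
/-- For a sorted `2n`-dimensional probability vector `μ` and `t ≥ 0`, the vector
`(diag(μ) + t·e₁e₁ᵀ)/(1+t)` majorizes `ν = (μ_{2n}+t, μ₁, …, μ_{2n−1})/(1+t)`, and `ν`
majorizes `(μ_{2n}+t, (1−μ_{2n})/(2n−1), …, (1−μ_{2n})/(2n−1))/(1+t)`. -/
theorem shiftVec_majorization (n : ℕ) (hn : 1 ≤ n) (μ : Fin (2 * n) → ℝ)
    (hsort : ∀ i j : Fin (2 * n), i ≤ j → μ j ≤ μ i)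
    (hnonneg : ∀ i, 0 ≤ μ i) (hsum : ∑ i, μ i = 1)
    (t : ℝ) (ht : 0 ≤ t) :
    Majorizes (fun i => (μ i + if i.val = 0 then t else 0) / (1 + t))
        (shiftVec n μ t) ∧
    Majorizes (shiftVec n μ t)
        (fun i => (if i.val = 0 then μ ⟨2 * n - 1, by omega⟩ + t
          else (1 - μ ⟨2 * n - 1, by omega⟩) / ((2 * n : ℝ) - 1)) / (1 + t)) := by
  haveI : NeZero (2 * n) := ⟨by omega⟩
  have hmn : 2 ≤ 2 * n := by omega
  have ht1 : (0:ℝ) < 1 + t := by linarith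
  set last : Fin (2 * n) := ⟨2 * n - 1, by omega⟩ with hlastdef
  -- the shifted-index map
  set σ : Fin (2 * n) → Fin (2 * n) := fun i =>
    if _ : i.val = 0 then ⟨2 * n - 1, by omega⟩
    else ⟨i.val - 1, by have := i.isLt; omega⟩ with hσ
  have hσval : ∀ i : Fin (2 * n), (σ i).val = if i.val = 0 then 2 * n - 1 else i.val - 1 := by
    intro i; simp only [hσ]; split <;> simp_all
  have hσinj : Function.Injective σ := by
    intro a b hab
    have h := congrArg Fin.val hab
    rw [hσval, hσval] at h
    have ha := a.isLt; have hb := b.isLt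
    apply Fin.ext
    split_ifs at h <;> omega
  set ρ : Fin (2 * n) → Fin (2 * n) := fun j =>
    if _ : j.val = 2 * n - 1 then 0
    else ⟨j.val + 1, by have := j.isLt; omega⟩ with hρ
  have hρval : ∀ j : Fin (2 * n), (ρ j).val = if j.val = 2 * n - 1 then 0 else j.val + 1 := by
    intro j; simp only [hρ]; split <;> simp_all
  have hσρ : ∀ j, σ (ρ j) = j := by
    intro j
    apply Fin.ext
    rw [hσval, hρval]
    have := j.isLt
    split_ifs <;> first | contradiction | omega
  have hρinj : Function.Injective ρ := by
    intro a b hab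
    rw [← hσρ a, ← hσρ b, hab]
  -- rewrite shiftVec via σ
  have hshift : shiftVec n μ t =
      fun i => (μ (σ i) + if i.val = 0 then t else 0) / (1 + t) := by
    funext i
    have h' : (i = 0) ↔ i.val = 0 := ⟨fun e => by simp [e], fun e => Fin.ext (by simpa using e)⟩
    by_cases h : i.val = 0 <;> simp [shiftVec, hσ, h, h']
  -- sums over arbitrary sets
  have hsumW : ∀ B : Finset (Fin (2 * n)),
      ∑ i ∈ B, (μ i + if i.val = 0 then t else 0) / (1 + t) =
        ((∑ i ∈ B, μ i) + if (0 : Fin (2 * n)) ∈ B then t else 0) / (1 + t) := by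
    intro B
    rw [← Finset.sum_div, Finset.sum_add_distrib]
    congr 2
    simp only [show ∀ i : Fin (2 * n), (i.val = 0) = (i = (0 : Fin (2 * n))) from fun i => propext ⟨fun h => Fin.ext (by simpa using h), fun h => by subst h; simp⟩]
    exact Finset.sum_ite_eq' B 0 (fun _ => t)
  have hsumN : ∀ A : Finset (Fin (2 * n)),
      ∑ i ∈ A, shiftVec n μ t i =
        ((∑ j ∈ A.image σ, μ j) + if (0 : Fin (2 * n)) ∈ A then t else 0) / (1 + t) := by
    intro A
    rw [hshift, ← Finset.sum_div, Finset.sum_add_distrib]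
    congr 2
    · exact (Finset.sum_image (fun a _ b _ h => hσinj h)).symm
    · simp only [show ∀ i : Fin (2 * n), (i.val = 0) = (i = (0 : Fin (2 * n))) from fun i => propext ⟨fun h => Fin.ext (by simpa using h), fun h => by subst h; simp⟩]
      exact Finset.sum_ite_eq' A 0 (fun _ => t)
  have hsumNρ : ∀ C : Finset (Fin (2 * n)),
      ∑ i ∈ C.image ρ, shiftVec n μ t i =
        ((∑ j ∈ C, μ j) + if last ∈ C then t else 0) / (1 + t) := by
    intro C
    rw [Finset.sum_image (fun a _ b _ h => hρinj h), hshift]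
    simp only
    rw [← Finset.sum_div, Finset.sum_add_distrib]
    congr 2
    · exact Finset.sum_congr rfl (fun j _ => by rw [hσρ])
    · have hcond : ∀ j : Fin (2 * n), ((ρ j).val = 0) = (j = last) := by
        intro j
        have := j.isLt
        rw [hρval]
        apply propext
        constructor
        · intro h; apply Fin.ext; simp only [hlastdef]; split_ifs at h <;> first | contradiction | omega
        · intro h; subst h; simp [hlastdef]
      simp only [hcond]
      exact Finset.sum_ite_eq' C last (fun _ => t)
  have himg : Finset.univ.image σ = Finset.univ :=
    Finset.image_univ_of_surjective (Finite.surjective_of_injective hσinj)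
  -- constants for part 2
  set avg : ℝ := (1 - μ last) / ((2 * n : ℝ) - 1) with havg
  have hpos : (0:ℝ) < (2 * n : ℝ) - 1 := by
    have h2 : (2:ℝ) ≤ ((2 * n : ℕ) : ℝ) := by exact_mod_cast hmn
    push_cast at h2
    linarith
  have hsumF : ∀ A : Finset (Fin (2 * n)),
      ∑ i ∈ A, (if i.val = 0 then μ last + t else avg) / (1 + t) =
        ((A.card : ℝ) * avg +
          if (0 : Fin (2 * n)) ∈ A then μ last + t - avg else 0) / (1 + t) := by
    intro A
    rw [← Finset.sum_div]
    congr 1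
    have hterm : ∀ i : Fin (2 * n),
        (if i.val = 0 then μ last + t else avg) =
        avg + (if i.val = 0 then μ last + t - avg else 0) := by
      intro i
      split_ifs with h
      · ring
      · ring
    rw [Finset.sum_congr rfl (fun i _ => hterm i), Finset.sum_add_distrib,
      Finset.sum_const, nsmul_eq_mul]
    congr 1
    simp only [show ∀ i : Fin (2 * n), (i.val = 0) = (i = (0 : Fin (2 * n))) from
      fun i => propext ⟨fun h => Fin.ext (by simpa using h), fun h => by subst h; simp⟩]
    exact Finset.sum_ite_eq' A 0 (fun _ => μ last + t - avg)
  have htot : ∑ i ∈ Finset.univ.filter (fun i : Fin (2 * n) => i.val < 2 * n - 1), μ i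
      = 1 - μ last := by
    have hsplit := Finset.sum_filter_add_sum_filter_not Finset.univ
      (fun i : Fin (2 * n) => i.val < 2 * n - 1) μ
    have hone : Finset.univ.filter (fun i : Fin (2 * n) => ¬ i.val < 2 * n - 1) = {last} := by
      ext i
      simp only [Finset.mem_filter, Finset.mem_univ, true_and, Finset.mem_singleton,
        Fin.ext_iff, hlastdef]
      have := i.isLt
      omega
    rw [hone, Finset.sum_singleton, hsum] at hsplit
    linarith
  have havgle : ∀ j : ℕ, j ≤ 2 * n - 1 →
      (j : ℝ) * avg ≤ ∑ i ∈ Finset.univ.filter (fun i : Fin (2 * n) => i.val < j), μ i := by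
    intro j hj
    have hkey := key_sorted μ hsort j (2 * n - 1) hj (by omega)
    rw [htot] at hkey
    have hcast : ((2 * n - 1 : ℕ) : ℝ) = (2 * n : ℝ) - 1 := by
      have h1 : (1:ℕ) ≤ 2 * n := by omega
      push_cast [Nat.cast_sub h1]
      ring
    rw [hcast] at hkey
    rw [havg, ← mul_div_assoc, div_le_iff₀ hpos]
    nlinarith [hkey]
  constructor
  · constructor
    · intro k
      apply maxSum_mono
      intro A hA
      by_cases h0 : (0 : Fin (2 * n)) ∈ A
      · by_cases h0B : (0 : Fin (2 * n)) ∈ A.image σ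
        · refine ⟨A.image σ, by rw [Finset.card_image_of_injective _ hσinj, hA], ?_⟩
          simp only [hsumN, hsumW, if_pos h0, if_pos h0B]
          exact le_refl _
        · have hlastB : last ∈ A.image σ := by
            refine Finset.mem_image.2 ⟨0, h0, ?_⟩
            apply Fin.ext
            rw [hσval]
            simp [hlastdef]
          have h0ne : (0 : Fin (2 * n)) ∉ (A.image σ).erase last :=
            fun hc => h0B (Finset.mem_of_mem_erase hc)
          refine ⟨insert 0 ((A.image σ).erase last), ?_, ?_⟩
          · rw [Finset.card_insert_of_notMem h0ne, Finset.card_erase_of_mem hlastB,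
              Finset.card_image_of_injective _ hσinj, hA]
            have hk1 : 0 < A.card := Finset.card_pos.2 ⟨0, h0⟩
            omega
          · simp only [hsumN, hsumW, if_pos h0, Finset.mem_insert_self, if_pos,
              Finset.sum_insert h0ne, Finset.sum_erase_eq_sub hlastB]
            have hμ : μ last ≤ μ 0 := hsort 0 last (by simp [Fin.le_def])
            rw [div_le_div_iff_of_pos_right ht1]
            linarith
      · refine ⟨A.image σ, by rw [Finset.card_image_of_injective _ hσinj, hA], ?_⟩
        simp only [hsumN, hsumW, if_neg h0]
        rw [div_le_div_iff_of_pos_right ht1]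
        split_ifs with h
        · linarith
        · linarith
    · simp only [hsumN, hsumW, himg]
  · constructor
    · intro k
      apply maxSum_mono
      intro A hA
      have hk2n : A.card ≤ 2 * n := by simpa using A.card_le_univ
      by_cases h0 : (0 : Fin (2 * n)) ∈ A
      · have hk1 : 1 ≤ A.card := Finset.card_pos.2 ⟨0, h0⟩
        have hlastC : last ∉ Finset.univ.filter
            (fun i : Fin (2 * n) => i.val < A.card - 1) := by
          simp only [Finset.mem_filter, Finset.mem_univ, true_and, hlastdef]
          omega
        set C := insert last (Finset.univ.filter
          (fun i : Fin (2 * n) => i.val < A.card - 1)) with hC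
        refine ⟨C.image ρ, ?_, ?_⟩
        · rw [Finset.card_image_of_injective _ hρinj, hC,
            Finset.card_insert_of_notMem hlastC, card_filter_lt _ (by omega)]
          omega
        · simp only [hsumF, hsumNρ, if_pos h0, hC, Finset.mem_insert_self, if_pos,
            Finset.sum_insert hlastC]
          have hav := havgle (A.card - 1) (by omega)
          have hcast : ((A.card - 1 : ℕ) : ℝ) = (A.card : ℝ) - 1 := by
            push_cast [Nat.cast_sub hk1]
            ring
          rw [hcast] at hav
          rw [div_le_div_iff_of_pos_right ht1]
          linarith
      · have hkle : A.card ≤ 2 * n - 1 := by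
          have hsub : A ⊆ Finset.univ.erase 0 := fun i hi =>
            Finset.mem_erase.2 ⟨by rintro rfl; exact h0 hi, Finset.mem_univ i⟩
          have := Finset.card_le_card hsub
          rw [Finset.card_erase_of_mem (Finset.mem_univ _), Finset.card_univ,
            Fintype.card_fin] at this
          omega
        have hlastC : last ∉ Finset.univ.filter
            (fun i : Fin (2 * n) => i.val < A.card) := by
          simp only [Finset.mem_filter, Finset.mem_univ, true_and, hlastdef]
          omega
        refine ⟨(Finset.univ.filter (fun i : Fin (2 * n) => i.val < A.card)).image ρ, ?_, ?_⟩
        · rw [Finset.card_image_of_injective _ hρinj, card_filter_lt _ (by omega)]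
          exact hA
        · simp only [hsumF, hsumNρ, if_neg h0, if_neg hlastC]
          have hav := havgle A.card hkle
          rw [div_le_div_iff_of_pos_right ht1]
          linarith
    · simp only [hsumF, hsumN, himg]
      rw [Finset.card_univ, Fintype.card_fin]
      have hmem : (0 : Fin (2 * n)) ∈ (Finset.univ : Finset (Fin (2 * n))) := Finset.mem_univ _
      simp only [if_pos hmem, hsum]
      congr 1
      have h1 : ((2 * n : ℝ) - 1) * avg = 1 - μ last := by
        rw [havg]
        field_simp
      have h2 : ((2 * n : ℕ) : ℝ) = (2 * n : ℝ) := by push_cast; ring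
      rw [h2]
      linarith
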